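/- arXiv:1207.4366 — 5 statements merged into one kernel-verified Lean document; each statement's English description precedes it below -/
import Mathlib

section
/- Let F be an intersection-closed biset-family covered by an edge set F₀, and let U ⊆ F be a subfamily of pairwise disjoint bisets such that every edge of F₀ has its tail in the inner part of some member of U and each Û ∈ U is covered by exactly one edge e_U of F₀. Let J ⊆ F₀ cover F[U] = {Ŝ ∈ F : Ŝ ⊆ Û for some Û ∈ U}, and let Ĉ be a core of the residual family F^J. Then for any Û ∈ U intersecting Ĉ, the only edge of J covering Ĉ ∩ Û is e_U; consequently Û intersects no core of F^J other than Ĉ. -/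
open Set

variable {V : Type*}

/-- A pair `(S, S⁺)` is a biset when `S ⊆ S⁺`. -/
def IsBiset (X : Set V × Set V) : Prop := X.1 ⊆ X.2

/-- An edge `(u,v)` covers biset `(S,S⁺)` if `u ∈ S` and `v ∈ V ∖ S⁺`. -/
def Covers (e : V × V) (X : Set V × Set V) : Prop := e.1 ∈ X.1 ∧ e.2 ∈ X.2ᶜ

/-- Componentwise intersection of bisets. -/
def bCap (X Y : Set V × Set V) : Set V × Set V := (X.1 ∩ Y.1, X.2 ∩ Y.2)

/-- Componentwise union of bisets. -/
def bCup (X Y : Set V × Set V) : Set V × Set V := (X.1 ∪ Y.1, X.2 ∪ Y.2)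

/-- Bisets intersect if their inner parts intersect. -/
def Intersects (X Y : Set V × Set V) : Prop := (X.1 ∩ Y.1).Nonempty

/-- Bisets cross if inner parts intersect and outer parts do not cover `V`. -/
def Cross (X Y : Set V × Set V) : Prop := (X.1 ∩ Y.1).Nonempty ∧ X.2 ∪ Y.2 ≠ Set.univ

/-- Co-biset of `(S,S⁺)` is `(V∖S⁺, V∖S)`. -/
def coBiset (X : Set V × Set V) : Set V × Set V := (X.2ᶜ, X.1ᶜ)

/-- Crossing biset-family. -/
def CrossingFamily (F : Set (Set V × Set V)) : Prop :=
  ∀ X ∈ F, ∀ Y ∈ F, Cross X Y → bCap X Y ∈ F ∧ bCup X Y ∈ F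

/-- Intersecting biset-family. -/
def IntersectingFamily (F : Set (Set V × Set V)) : Prop :=
  ∀ X ∈ F, ∀ Y ∈ F, Intersects X Y → bCap X Y ∈ F ∧ bCup X Y ∈ F

/-- Intersection-closed biset-family. -/
def IntersectionClosed (F : Set (Set V × Set V)) : Prop :=
  ∀ X ∈ F, ∀ Y ∈ F, Intersects X Y → bCap X Y ∈ F

/-- A biset is covered by some edge of `J`. -/
def CoveredBy (J : Set (V × V)) (X : Set V × Set V) : Prop := ∃ e ∈ J, Covers e X

/-- `J` covers every member of the family `F`. -/
def CoversFamily (J : Set (V × V)) (F : Set (Set V × Set V)) : Prop := ∀ X ∈ F, CoveredBy J X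

/-- Residual family: members of `F` not covered by any edge of `J`. -/
def Residual (F : Set (Set V × Set V)) (J : Set (V × V)) : Set (Set V × Set V) :=
  {X ∈ F | ¬ CoveredBy J X}

/-- Biset containment, componentwise. -/
def bSubset (X Y : Set V × Set V) : Prop := X.1 ⊆ Y.1 ∧ X.2 ⊆ Y.2

/-- A core of `F` : an inclusion-minimal member. -/
def IsCore (F : Set (Set V × Set V)) (C : Set V × Set V) : Prop :=
  C ∈ F ∧ ∀ S ∈ F, bSubset S C → S = C

/-- `F(Ĉ)` : members of `F` containing `Ĉ` and no other core of `F`. -/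
def FamAt (F : Set (Set V × Set V)) (C : Set V × Set V) : Set (Set V × Set V) :=
  {S ∈ F | bSubset C S ∧ ∀ C', IsCore F C' → bSubset C' S → C' = C}

/-- `F[U]` : members of `F` contained in some member of `U`. -/
def FamUnder (F U : Set (Set V × Set V)) : Set (Set V × Set V) :=
  {S ∈ F | ∃ W ∈ U, bSubset S W}

/-- `k`-regular biset-family. -/
def kRegular (k : ℕ) (F : Set (Set V × Set V)) : Prop :=
  ∀ X ∈ F, ∀ Y ∈ F, Intersects X Y → k + 1 ≤ (X.1 ∪ Y.1)ᶜ.ncard →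
    bCap X Y ∈ F ∧ bCup X Y ∈ F

/-- `q`-semi-intersecting biset-family. -/
def qSemiIntersecting (q : ℕ) (S : Set (Set V × Set V)) : Prop :=
  IntersectionClosed S ∧ (∀ X ∈ S, X.1.ncard ≤ q) ∧
  ∀ X ∈ S, ∀ Y ∈ S, Intersects X Y → (X.1 ∪ Y.1).ncard ≤ q → bCup X Y ∈ S

/-!
An edge of `J` covering `Ĉ ∩ Û` cannot leave `Ĉ⁺`, since `J` does not cover the core `Ĉ`; so it
leaves `Û⁺`, covers `Û`, and must be `e_U`. Such an edge exists because `Ĉ ∩ Û ∈ F[U]`. Hence every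
core of `F^J` met by `Û` contains the tail of `e_U`, and two intersecting cores of the
intersection-closed family `F^J` coincide.
-/

theorem Intersects.symm {X Y : Set V × Set V} (h : Intersects X Y) : Intersects Y X := by
  obtain ⟨x, hxX, hxY⟩ := h
  exact ⟨x, hxY, hxX⟩

theorem mem_outer_of_not_coveredBy {J : Set (V × V)} {X : Set V × Set V} {e : V × V}
    (hX : ¬ CoveredBy J X) (he : e ∈ J) (htail : e.1 ∈ X.1) : e.2 ∈ X.2 := by
  by_contra hhead
  exact hX ⟨e, he, htail, hhead⟩

/-- An edge covering `X ∩ Y` covers `X` or `Y`. -/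
theorem IntersectionClosed.residual {F : Set (Set V × Set V)} (hF : IntersectionClosed F)
    (J : Set (V × V)) : IntersectionClosed (Residual F J) := by
  intro X hX Y hY hXY
  refine ⟨hF X hX.1 Y hY.1 hXY, ?_⟩
  rintro ⟨e, he, ⟨htailX, htailY⟩, hhead⟩
  exact hhead ⟨mem_outer_of_not_coveredBy hX.2 he htailX,
    mem_outer_of_not_coveredBy hY.2 he htailY⟩

theorem IsCore.eq_of_intersects {G : Set (Set V × Set V)} (hG : IntersectionClosed G)
    {C C' : Set V × Set V} (hC : IsCore G C) (hC' : IsCore G C') (h : Intersects C C') :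
    C = C' := by
  have hcap : bCap C C' ∈ G := hG C hC.1 C' hC'.1 h
  exact (hC.2 _ hcap ⟨inter_subset_left, inter_subset_left⟩).symm.trans
    (hC'.2 _ hcap ⟨inter_subset_right, inter_subset_right⟩)

theorem bCap_mem_famUnder {F U : Set (Set V × Set V)} (hF : IntersectionClosed F) (hUF : U ⊆ F)
    {D W : Set V × Set V} (hD : D ∈ F) (hW : W ∈ U) (hDW : Intersects D W) :
    bCap D W ∈ FamUnder F U :=
  ⟨hF D hD W (hUF hW) hDW, W, hW, inter_subset_right, inter_subset_right⟩

theorem setOf_covers_bCap_eq_singleton {J : Set (V × V)} {D W : Set V × Set V} {f : V × V}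
    (hD : ¬ CoveredBy J D) (hDW : CoveredBy J (bCap D W))
    (huniq : ∀ e ∈ J, Covers e W → e = f) :
    {e ∈ J | Covers e (bCap D W)} = {f} := by
  have hcovers_W : ∀ e ∈ J, Covers e (bCap D W) → e = f := fun e he ⟨⟨htailD, htailW⟩, hhead⟩ =>
    huniq e he ⟨htailW, fun hW => hhead ⟨mem_outer_of_not_coveredBy hD he htailD, hW⟩⟩
  obtain ⟨e₀, he₀, he₀cov⟩ := hDW
  obtain rfl := hcovers_W e₀ he₀ he₀cov
  exact eq_singleton_iff_unique_mem.mpr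
    ⟨⟨he₀, he₀cov⟩, fun e ⟨he, hcov⟩ => hcovers_W e he hcov⟩

theorem stmt_12_general (F U : Set (Set V × Set V)) (F₀ J : Set (V × V))
    (eU : (Set V × Set V) → V × V)
    (hF : IntersectionClosed F)
    (hUF : U ⊆ F)
    (heU : ∀ W ∈ U, eU W ∈ F₀ ∧ Covers (eU W) W ∧ ∀ e ∈ F₀, Covers e W → e = eU W)
    (hJ : J ⊆ F₀)
    (hJcov : CoversFamily J (FamUnder F U))
    (C : Set V × Set V) (hC : IsCore (Residual F J) C)
    (W : Set V × Set V) (hW : W ∈ U) (hWC : Intersects W C) :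
    {e ∈ J | Covers e (bCap C W)} = {eU W} ∧
    ∀ C', IsCore (Residual F J) C' → Intersects W C' → C' = C := by
  have coverers : ∀ D, IsCore (Residual F J) D → Intersects W D →
      {e ∈ J | Covers e (bCap D W)} = {eU W} := fun D hD hWD =>
    setOf_covers_bCap_eq_singleton hD.1.2
      (hJcov _ (bCap_mem_famUnder hF hUF hD.1.1 hW hWD.symm))
      (fun e he hcov => (heU W hW).2.2 e (hJ he) hcov)
  refine ⟨coverers C hC hWC, fun C' hC' hWC' => ?_⟩
  have hC_cov : Covers (eU W) (bCap C W) := ((coverers C hC hWC).ge (mem_singleton _)).2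
  have hC'_cov : Covers (eU W) (bCap C' W) := ((coverers C' hC' hWC').ge (mem_singleton _)).2
  exact hC'.eq_of_intersects (hF.residual J) hC ⟨(eU W).1, hC'_cov.1.1, hC_cov.1.1⟩

theorem stmt_12 (F U : Set (Set V × Set V)) (F₀ J : Set (V × V))
    (eU : (Set V × Set V) → V × V)
    (hF : IntersectionClosed F)
    (hcov : CoversFamily F₀ F)
    (hUF : U ⊆ F)
    (hdisj : ∀ X ∈ U, ∀ Y ∈ U, X ≠ Y → ¬ Intersects X Y)
    (htail : ∀ e ∈ F₀, ∃ W ∈ U, e.1 ∈ W.1)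
    (heU : ∀ W ∈ U, eU W ∈ F₀ ∧ Covers (eU W) W ∧ ∀ e ∈ F₀, Covers e W → e = eU W)
    (hJ : J ⊆ F₀)
    (hJcov : CoversFamily J (FamUnder F U))
    (C : Set V × Set V) (hC : IsCore (Residual F J) C)
    (W : Set V × Set V) (hW : W ∈ U) (hWC : Intersects W C) :
    {e ∈ J | Covers e (bCap C W)} = {eU W} ∧
    ∀ C', IsCore (Residual F J) C' → Intersects W C' → C' = C :=
  stmt_12_general F U F₀ J eU hF hUF heU hJ hJcov C hC W hW hWC
end

section
/- Let F be a biset-family and J a set of directed edges on V such that for some core Ĉ of F, J covers every member of F(Ĉ) and J covers no core of F other than Ĉ. Then the set of cores of the residual family F^J equals the set of cores of F with Ĉ removed, so ν(F^J) = ν(F) − 1. -/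
/-!
A member of `F^J` contains a core of `F`. If that core is `Ĉ`, the member cannot lie in `F(Ĉ)`
(which `J` covers entirely), so it contains another core of `F` as well. Cores other than `Ĉ`
survive in `F^J`, hence a core of `F^J` contains, and therefore equals, a core of `F` other
than `Ĉ`; conversely such a core stays minimal in the smaller family `F^J`.
-/

open Set

variable {V : Type*}

section Cores

variable {F : Set (Set V × Set V)} {J : Set (V × V)} {C C' S : Set V × Set V}

lemma isCore_iff_minimal : IsCore F C ↔ Minimal (· ∈ F) C :=
  and_congr_right fun _ =>
    ⟨fun h S hS hSC => (h S hS hSC).ge, fun h _ hS hSC => le_antisymm hSC (h hS hSC)⟩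

lemma exists_isCore_bSubset [Finite V] (hS : S ∈ F) : ∃ D, IsCore F D ∧ bSubset D S :=
  let ⟨D, hDS, hD⟩ := exists_minimal_le_of_wellFoundedLT (· ∈ F) S hS
  ⟨D, isCore_iff_minimal.2 hD, hDS⟩

lemma IsCore.residual (hC : IsCore F C) (hJ : ¬ CoveredBy J C) : IsCore (Residual F J) C :=
  ⟨⟨hC.1, hJ⟩, fun S hS => hC.2 S hS.1⟩

lemma exists_isCore_ne_bSubset_of_not_coveredBy [Finite V]
    (hcov : CoversFamily J (FamAt F C)) (hS : S ∈ F) (hJ : ¬ CoveredBy J S) :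
    ∃ D, IsCore F D ∧ D ≠ C ∧ bSubset D S := by
  by_contra! h
  obtain ⟨D, hD, hDS⟩ := exists_isCore_bSubset hS
  obtain rfl : D = C := by_contra fun hne => h D hD hne hDS
  exact hJ (hcov S ⟨hS, hDS, fun D' hD' hD'S => by_contra fun hne => h D' hD' hne hD'S⟩)

lemma isCore_residual_iff [Finite V] (hcov : CoversFamily J (FamAt F C))
    (hother : ∀ C', IsCore F C' → C' ≠ C → ¬ CoveredBy J C') :
    IsCore (Residual F J) C' ↔ IsCore F C' ∧ C' ≠ C := by
  refine ⟨fun hC' => ?_, fun ⟨hC', hne⟩ => hC'.residual (hother C' hC' hne)⟩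
  obtain ⟨D, hD, hDC, hDC'⟩ :=
    exists_isCore_ne_bSubset_of_not_coveredBy hcov hC'.1.1 hC'.1.2
  obtain rfl : D = C' := hC'.2 D ⟨hD.1, hother D hD hDC⟩ hDC'
  exact ⟨hD, hDC⟩

end Cores

theorem stmt_15 [Fintype V] (F : Set (Set V × Set V)) (J : Set (V × V))
    (C : Set V × Set V) (hC : IsCore F C)
    (hcov : CoversFamily J (FamAt F C))
    (hother : ∀ C', IsCore F C' → C' ≠ C → ¬ CoveredBy J C') :
    {C' | IsCore (Residual F J) C'} = {C' | IsCore F C'} \ {C} ∧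
    {C' | IsCore (Residual F J) C'}.ncard = {C' | IsCore F C'}.ncard - 1 := by
  have hcores : {C' | IsCore (Residual F J) C'} = {C' | IsCore F C'} \ {C} :=
    Set.ext fun _ => isCore_residual_iff hcov hother
  exact ⟨hcores, hcores ▸ Set.ncard_sdiff_singleton_of_mem (s := {C' | IsCore F C'}) hC⟩
end

section
/- Let F be a crossing biset-family on an n-element set V such that |S| ≥ q for the inner part S of every biset of F, and also |V∖S⁺| ≥ q for every (S,S⁺) ∈ F. If C is a collection of cores of F whose inner parts all contain a common element v, then the sets {V ∖ C⁺ : Ĉ ∈ C} are pairwise disjoint and nonempty; consequently |C| ≤ ⌊n/q⌋ (with q ≥ 1). -/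
open Set

variable {V : Type*}

/-!
Two cores whose inner parts share `v` and whose outer parts miss a common vertex would cross,
so their intersection would lie in `F` and, by minimality, equal both of them. Hence the sets
`V ∖ C⁺` of the cores in `C` are pairwise disjoint subsets of `V` of size at least `q`, so there
are at most `n / q` of them.
-/

theorem Set.Finite.ncard_mul_le_card_of_pairwiseDisjoint {ι α : Type*} [Fintype α] {s : Set ι}
    (hs : s.Finite) {f : ι → Set α} (hf : s.PairwiseDisjoint f) {q : ℕ}
    (hq : ∀ i ∈ s, q ≤ (f i).ncard) : s.ncard * q ≤ Fintype.card α := by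
  classical
  have hf' : (hs.toFinset : Set ι).PairwiseDisjoint fun i => (f i).toFinset :=
    fun i hi j hj hij =>
      Set.disjoint_toFinset.2 (hf (hs.mem_toFinset.1 hi) (hs.mem_toFinset.1 hj) hij)
  calc s.ncard * q = hs.toFinset.card • q := by rw [ncard_eq_toFinset_card s hs, smul_eq_mul]
    _ ≤ ∑ i ∈ hs.toFinset, (f i).toFinset.card :=
        Finset.card_nsmul_le_sum _ _ _ fun i hi => by
          simpa [ncard_eq_toFinset_card'] using hq i (hs.mem_toFinset.1 hi)
    _ = (hs.toFinset.biUnion fun i => (f i).toFinset).card := (Finset.card_biUnion hf').symm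
    _ ≤ Fintype.card α := Finset.card_le_univ _

section Bisets

variable {F : Set (Set V × Set V)} {X Y : Set V × Set V}

theorem cross_iff : Cross X Y ↔ (X.1 ∩ Y.1).Nonempty ∧ (X.2ᶜ ∩ Y.2ᶜ).Nonempty := by
  rw [Cross, ← compl_union, nonempty_compl]

theorem IsCore.eq_of_cross (hF : CrossingFamily F) (hX : IsCore F X) (hY : IsCore F Y)
    (hXY : Cross X Y) : X = Y := by
  have hcap := (hF X hX.1 Y hY.1 hXY).1
  have hcapX : bCap X Y = X := hX.2 _ hcap ⟨inter_subset_left, inter_subset_left⟩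
  have hcapY : bCap X Y = Y := hY.2 _ hcap ⟨inter_subset_right, inter_subset_right⟩
  exact hcapX.symm.trans hcapY

theorem IsCore.compl_snd_inter_eq_empty (hF : CrossingFamily F) (hX : IsCore F X)
    (hY : IsCore F Y) (hXY : (X.1 ∩ Y.1).Nonempty) (hne : X ≠ Y) : X.2ᶜ ∩ Y.2ᶜ = ∅ := by
  by_contra h
  exact hne (hX.eq_of_cross hF hY (cross_iff.2 ⟨hXY, nonempty_iff_ne_empty.2 h⟩))

end Bisets

theorem stmt_16 [Fintype V] (F : Set (Set V × Set V)) (q : ℕ) (hq : 1 ≤ q)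
    (hF : CrossingFamily F)
    (hsize : ∀ S ∈ F, q ≤ S.1.ncard ∧ q ≤ S.2ᶜ.ncard)
    (C : Set (Set V × Set V)) (hC : ∀ X ∈ C, IsCore F X)
    (v : V) (hv : ∀ X ∈ C, v ∈ X.1) :
    (∀ X ∈ C, ∀ Y ∈ C, X ≠ Y → X.2ᶜ ∩ Y.2ᶜ = ∅) ∧
    (∀ X ∈ C, X.2ᶜ.Nonempty) ∧
    C.ncard ≤ Fintype.card V / q := by
  have hdisj : ∀ X ∈ C, ∀ Y ∈ C, X ≠ Y → X.2ᶜ ∩ Y.2ᶜ = ∅ := fun X hX Y hY hne =>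
    (hC X hX).compl_snd_inter_eq_empty hF (hC Y hY) ⟨v, hv X hX, hv Y hY⟩ hne
  have hout : ∀ X ∈ C, q ≤ X.2ᶜ.ncard := fun X hX => (hsize X (hC X hX).1).2
  refine ⟨hdisj, fun X hX => nonempty_of_ncard_ne_zero (by have := hout X hX; omega), ?_⟩
  rw [Nat.le_div_iff_mul_le hq]
  exact (toFinite C).ncard_mul_le_card_of_pairwiseDisjoint
    (fun X hX Y hY hne => disjoint_iff_inter_eq_empty.2 (hdisj X hX Y hY hne)) hout
end

section
/- Let S be a q-semi-intersecting biset-family on an n-element set V, and suppose U ⊆ S is a subfamily of pairwise disjoint bisets and J an edge set such that for every core Ĉ of S^J: (i) every Û ∈ U intersecting Ĉ intersects no other core of S^J, and (ii) the union B̂_C of Ĉ with all members of U intersecting Ĉ is not in S. Then the inner parts of the bisets B̂_C over all cores Ĉ of S^J are pairwise disjoint and each has size at least q+1; consequently the number of cores of S^J is at most ⌊n/(q+1)⌋. -/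
open Set

variable {V : Type*}

/-!
Distinct cores of the intersection-closed family `S^J` are disjoint, and each member of `U`
meets at most one of them while distinct members of `U` are disjoint, so the inner parts of the
bisets `B̂_C` are pairwise disjoint. If some `B̂_C` had at most `q` inner elements, adding the
members of `U` meeting `Ĉ` to `Ĉ` one at a time would keep every partial union of size at most
`q`, so semi-intersection would put `B̂_C` in `S`. Disjoint sets of size `≥ q + 1` in an
`n`-element set number at most `n / (q + 1)`.
-/

theorem Set.ncard_mul_le_card_of_pairwiseDisjoint {ι α : Type*} [Finite α] {t : Set ι}
    {s : ι → Set α} {m : ℕ} (h : t.PairwiseDisjoint s) (hm : ∀ i ∈ t, m ≤ (s i).ncard) :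
    t.ncard * m ≤ Nat.card α := by
  obtain ht | ht := t.finite_or_infinite
  · lift t to Finset ι using ht
    calc (t : Set ι).ncard * m = ∑ i ∈ t, m := by simp
      _ ≤ ∑ i ∈ t, (s i).ncard := Finset.sum_le_sum hm
      _ = (⋃ i ∈ (t : Set ι), s i).ncard := by
        rw [t.finite_toSet.ncard_biUnion (fun i _ ↦ toFinite _) h, finsum_mem_coe_finset]
      _ ≤ Nat.card α := ncard_le_card _
  · simp [ht.ncard]

/-- The paper's `B̂_C` is `bCupFamily C {X ∈ U | Intersects X C}`. -/
def bCupFamily (C : Set V × Set V) (T : Set (Set V × Set V)) : Set V × Set V :=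
  (C.1 ∪ ⋃ W ∈ T, W.1, C.2 ∪ ⋃ W ∈ T, W.2)

@[simp]
theorem bCupFamily_empty (C : Set V × Set V) : bCupFamily C ∅ = C := by
  simp [bCupFamily]

theorem bCupFamily_insert (C a : Set V × Set V) (T : Set (Set V × Set V)) :
    bCupFamily C (insert a T) = bCup (bCupFamily C T) a := by
  simp only [bCupFamily, bCup, biUnion_insert, Prod.mk.injEq]
  constructor <;> ac_rfl

theorem bCupFamily_fst_mono (C : Set V × Set V) {T T' : Set (Set V × Set V)} (h : T ⊆ T') :
    (bCupFamily C T).1 ⊆ (bCupFamily C T').1 :=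
  union_subset_union_right _ (biUnion_subset_biUnion_left h)

theorem IntersectionClosed.not_intersects_of_isCore {F : Set (Set V × Set V)}
    (hF : IntersectionClosed F) {C C' : Set V × Set V} (hC : IsCore F C) (hC' : IsCore F C')
    (hne : C ≠ C') : ¬ Intersects C C' := fun hCC' ↦
  have hcap := hF C hC.1 C' hC'.1 hCC'
  hne <| (hC.2 _ hcap ⟨inter_subset_left, inter_subset_left⟩).symm.trans
    (hC'.2 _ hcap ⟨inter_subset_right, inter_subset_right⟩)

theorem disjoint_bCupFamily_intersecting {U : Set (Set V × Set V)} {C C' : Set V × Set V}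
    (hCC' : ¬ Intersects C C') (hU : ∀ X ∈ U, ∀ Y ∈ U, X ≠ Y → ¬ Intersects X Y)
    (hC : ∀ W ∈ U, Intersects W C → ¬ Intersects W C') :
    Disjoint (bCupFamily C {X ∈ U | Intersects X C}).1
      (bCupFamily C' {X ∈ U | Intersects X C'}).1 := by
  simp only [bCupFamily, Set.disjoint_left, mem_union, mem_iUnion, mem_ofPred_eq, exists_prop]
  rintro x (hxC | ⟨W, ⟨hWU, hWC⟩, hxW⟩) (hxC' | ⟨W', ⟨hW'U, hW'C'⟩, hxW'⟩)
  · exact hCC' ⟨x, hxC, hxC'⟩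
  · exact hC W' hW'U ⟨x, hxW', hxC⟩ hW'C'
  · exact hC W hWU hWC ⟨x, hxW, hxC'⟩
  · obtain rfl | hne := eq_or_ne W W'
    · exact hC W hWU hWC hW'C'
    · exact hU W hWU W' hW'U hne ⟨x, hxW, hxW'⟩

theorem qSemiIntersecting.bCupFamily_mem [Finite V] {q : ℕ} {S T : Set (Set V × Set V)}
    {C : Set V × Set V} (hS : qSemiIntersecting q S) (hC : C ∈ S) (hTS : T ⊆ S)
    (hTC : ∀ W ∈ T, Intersects W C) (hq : (bCupFamily C T).1.ncard ≤ q) :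
    bCupFamily C T ∈ S := by
  refine Finite.induction_on_subset (motive := fun t _ ↦ bCupFamily C t ∈ S) T (toFinite T)
    (by simpa using hC) fun {a t} haT htT _ ih ↦ ?_
  obtain ⟨x, hxa, hxC⟩ := hTC a haT
  rw [bCupFamily_insert]
  have hsub : (bCupFamily C t).1 ∪ a.1 ⊆ (bCupFamily C T).1 :=
    union_subset (bCupFamily_fst_mono C htT)
      (subset_union_of_subset_right (subset_biUnion_of_mem (u := fun W ↦ W.1) haT) _)
  exact hS.2.2 _ ih a (hTS haT) ⟨x, Or.inl hxC, hxa⟩ ((ncard_le_ncard hsub).trans hq)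

theorem stmt_17 [Fintype V] (q : ℕ) (S U : Set (Set V × Set V)) (J : Set (V × V))
    (hS : qSemiIntersecting q S)
    (hUS : U ⊆ S)
    (hdisj : ∀ X ∈ U, ∀ Y ∈ U, X ≠ Y → ¬ Intersects X Y)
    (B : (Set V × Set V) → (Set V × Set V))
    (hB : ∀ C, IsCore (Residual S J) C →
      B C = (C.1 ∪ ⋃ W ∈ {X ∈ U | Intersects X C}, W.1,
             C.2 ∪ ⋃ W ∈ {X ∈ U | Intersects X C}, W.2))
    (h1 : ∀ C, IsCore (Residual S J) C → ∀ W ∈ U, Intersects W C →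
      ∀ C', IsCore (Residual S J) C' → Intersects W C' → C' = C)
    (h2 : ∀ C, IsCore (Residual S J) C → B C ∉ S) :
    (∀ C, IsCore (Residual S J) C → ∀ C', IsCore (Residual S J) C' → C ≠ C' →
      (B C).1 ∩ (B C').1 = ∅) ∧
    (∀ C, IsCore (Residual S J) C → q + 1 ≤ (B C).1.ncard) ∧
    {C | IsCore (Residual S J) C}.ncard ≤ Fintype.card V / (q + 1) := by
  have hBC : ∀ C, IsCore (Residual S J) C → B C = bCupFamily C {X ∈ U | Intersects X C} := hB
  have hdisjB : {C | IsCore (Residual S J) C}.PairwiseDisjoint fun C ↦ (B C).1 := by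
    intro C hC C' hC' hne
    simp only [Function.onFun, hBC C hC, hBC C' hC']
    exact disjoint_bCupFamily_intersecting (hS.1.residual J |>.not_intersects_of_isCore hC hC' hne)
      hdisj fun W hWU hWC hWC' ↦ hne (h1 C hC W hWU hWC C' hC' hWC').symm
  have hlarge : ∀ C, IsCore (Residual S J) C → q + 1 ≤ (B C).1.ncard := by
    intro C hC
    by_contra! hsmall
    refine h2 C hC ?_
    rw [hBC C hC] at hsmall ⊢
    exact hS.bCupFamily_mem hC.1.1 (fun W hW ↦ hUS hW.1) (fun W hW ↦ hW.2)
      (Nat.lt_succ_iff.mp hsmall)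
  refine ⟨fun C hC C' hC' hne ↦ disjoint_iff_inter_eq_empty.mp (hdisjB hC hC' hne), hlarge, ?_⟩
  rw [Nat.le_div_iff_mul_le q.succ_pos, ← Nat.card_eq_fintype_card]
  exact ncard_mul_le_card_of_pairwiseDisjoint hdisjB hlarge
end

section
/- Let F be a set-family on S ∪ T (S, T disjoint) that is (S,T)-crossing, and for each X ∈ F define the biset X̂' = (X ∩ S, S ∪ (X ∩ T)) on ground set S ∪ T. Then the biset-family F' = {X̂' : X ∈ F} is a crossing biset-family, and an edge (u,v) with u ∈ S, v ∈ T covers a set X (i.e. u ∈ X, v ∉ X) if and only if it covers the biset X̂'. -/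
open Set

variable {V : Type*}

-- The paper's `X̂'`.
def stBiset (S T X : Set V) : Set V × Set V := (X ∩ S, S ∪ (X ∩ T))

def IsSTCrossing (S T : Set V) (F : Set (Set V)) : Prop :=
  ∀ X ∈ F, ∀ Y ∈ F, (X ∩ Y ∩ S).Nonempty → (T \ (X ∪ Y)).Nonempty → X ∩ Y ∈ F ∧ X ∪ Y ∈ F

section stBiset

variable {S T : Set V}

theorem bCap_stBiset (X Y : Set V) :
    bCap (stBiset S T X) (stBiset S T Y) = stBiset S T (X ∩ Y) := by
  simp only [bCap, stBiset, Prod.mk.injEq]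
  constructor <;> ext <;> simp only [mem_inter_iff, mem_union] <;> tauto

theorem bCup_stBiset (X Y : Set V) :
    bCup (stBiset S T X) (stBiset S T Y) = stBiset S T (X ∪ Y) := by
  simp only [bCup, stBiset, Prod.mk.injEq]
  constructor <;> ext <;> simp only [mem_inter_iff, mem_union] <;> tauto

-- A point outside both outer parts lies in `T \ (X ∪ Y)`, because `S ∪ T = univ`.
theorem nonempty_of_cross_stBiset (hUniv : S ∪ T = univ) {X Y : Set V}
    (h : Cross (stBiset S T X) (stBiset S T Y)) :
    (X ∩ Y ∩ S).Nonempty ∧ (T \ (X ∪ Y)).Nonempty := by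
  obtain ⟨⟨x, hx⟩, hout⟩ := h
  obtain ⟨t, ht⟩ := (ne_univ_iff_exists_notMem _).1 hout
  simp only [stBiset, mem_union, mem_inter_iff, not_or, not_and] at hx ht
  have htT : t ∈ T := (mem_union _ _ _).1 (hUniv ▸ mem_univ t) |>.resolve_left ht.1.1
  exact ⟨⟨x, ⟨hx.1.1, hx.2.1⟩, hx.1.2⟩,
    ⟨t, htT, by rintro (htX | htY); exacts [ht.1.2 htX htT, ht.2.2 htY htT]⟩⟩

theorem IsSTCrossing.crossingFamily_image_stBiset (hUniv : S ∪ T = univ) {F : Set (Set V)}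
    (hF : IsSTCrossing S T F) : CrossingFamily (stBiset S T '' F) := by
  rintro _ ⟨X, hX, rfl⟩ _ ⟨Y, hY, rfl⟩ hcross
  obtain ⟨hS, hT⟩ := nonempty_of_cross_stBiset hUniv hcross
  obtain ⟨hcap, hcup⟩ := hF X hX Y hY hS hT
  rw [bCap_stBiset, bCup_stBiset]
  exact ⟨mem_image_of_mem _ hcap, mem_image_of_mem _ hcup⟩

theorem covers_stBiset_iff (hST : Disjoint S T) {X : Set V} {u v : V} (hu : u ∈ S) (hv : v ∈ T) :
    Covers (u, v) (stBiset S T X) ↔ u ∈ X ∧ v ∉ X := by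
  have hvS : v ∉ S := hST.notMem_of_mem_right hv
  simp [Covers, stBiset, hu, hv, hvS]

end stBiset

theorem stmt_18 (S T : Set V) (hST : Disjoint S T) (hUniv : S ∪ T = Set.univ)
    (F : Set (Set V))
    (hF : ∀ X ∈ F, ∀ Y ∈ F, (X ∩ Y ∩ S).Nonempty → (T \ (X ∪ Y)).Nonempty →
      X ∩ Y ∈ F ∧ X ∪ Y ∈ F) :
    CrossingFamily ((fun X => (X ∩ S, S ∪ (X ∩ T))) '' F) ∧
    ∀ X ∈ F, ∀ u ∈ S, ∀ v ∈ T,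
      ((u ∈ X ∧ v ∉ X) ↔ Covers (u, v) (X ∩ S, S ∪ (X ∩ T))) :=
  ⟨IsSTCrossing.crossingFamily_image_stBiset (F := F) hUniv hF,
    fun _ _ _ hu _ hv => (covers_stBiset_iff hST hu hv).symm⟩
end
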